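/- arXiv:1411.6723 — 2 statements merged into one kernel-verified Lean document; each statement's English description precedes it below -/
import Mathlib

section
/- Let X and Y be finite simple graphs. Then ϑ(X[Y]) = ϑ(X)·ϑ(Y) = ϑ(X * Y), where for a graph Z, ϑ(Z) is the supremum of ∑_{z,z'} M_{z,z'} over real positive semidefinite matrices M indexed by V(Z) with tr(M) = 1 and M_{z,z'} = 0 whenever z is adjacent to z' in Z. -/
/-!
Tensor products of feasible matrices for `X` and `Y` are feasible for `X * Y`, giving
`ϑ(X) ϑ(Y) ≤ ϑ(X * Y)`; and `X * Y` has more edges than `X[Y]`, so `ϑ(X * Y) ≤ ϑ(X[Y])`.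
For the remaining bound take `M` feasible for `X[Y]`. Its diagonal blocks `M_x` vanish on the
edges of `Y`, so `∑ M_x ≤ ϑ(Y) tr M_x`; the matrix `R` of block sums `R x x' = ∑ M_{x x'}` is
positive semidefinite and vanishes on the edges of `X`. Hence
`∑ M = ∑ R ≤ ϑ(X) tr R = ϑ(X) ∑_x ∑ M_x ≤ ϑ(X) ϑ(Y) tr M = ϑ(X) ϑ(Y)`.
-/

open Matrix

/-- The Lovász theta function `ϑ(Z)`. -/
noncomputable def lovTheta {γ : Type*} [Fintype γ] (Z : SimpleGraph γ) : ℝ :=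
  sSup {r : ℝ | ∃ M : Matrix γ γ ℝ, M.PosSemidef ∧ M.trace = 1 ∧
    (∀ z z', Z.Adj z z' → M z z' = 0) ∧ r = ∑ z, ∑ z', M z z'}

/-- The dual formulation `ϑ̄(Z) = Θ^{S₊}(Z)`. -/
noncomputable def lovThetaBar {γ : Type*} [Fintype γ] (Z : SimpleGraph γ) : ℝ :=
  sInf {t : ℝ | ∃ N : Matrix γ γ ℝ, N.PosSemidef ∧ (∀ z, N z z = t) ∧
    (∀ z z', Z.Adj z z' → N z z' = 0) ∧
    (N - Matrix.of fun _ _ => (1 : ℝ)).PosSemidef}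

/-- The lexicographic product `X[Y]`. -/
def lexProd {α β : Type*} (X : SimpleGraph α) (Y : SimpleGraph β) :
    SimpleGraph (α × β) where
  Adj p q := X.Adj p.1 q.1 ∨ (p.1 = q.1 ∧ Y.Adj p.2 q.2)
  symm := ⟨by
    rintro ⟨x, y⟩ ⟨x', y'⟩ (h | ⟨h1, h2⟩)
    · exact Or.inl h.symm
    · exact Or.inr ⟨h1.symm, h2.symm⟩⟩
  loopless := ⟨by rintro ⟨x, y⟩ (h | ⟨_, h⟩) <;> exact h.ne rfl⟩

/-- The disjunctive product `X * Y`. -/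
def disjProd {α β : Type*} (X : SimpleGraph α) (Y : SimpleGraph β) :
    SimpleGraph (α × β) where
  Adj p q := X.Adj p.1 q.1 ∨ Y.Adj p.2 q.2
  symm := ⟨by
    rintro ⟨x, y⟩ ⟨x', y'⟩ (h | h)
    · exact Or.inl h.symm
    · exact Or.inr h.symm⟩
  loopless := ⟨by rintro ⟨x, y⟩ (h | h) <;> exact h.ne rfl⟩

open scoped Kronecker

namespace Matrix

def blockSum {α β R : Type*} [Fintype β] [AddCommMonoid R] (M : Matrix (α × β) (α × β) R) :
    Matrix α α R :=
  of fun x x' => ∑ y, ∑ y', M (x, y) (x', y')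

lemma sum_entries_blockSum {α β R : Type*} [Fintype α] [Fintype β] [AddCommMonoid R]
    (M : Matrix (α × β) (α × β) R) : ∑ x, ∑ x', M.blockSum x x' = ∑ p, ∑ q, M p q := by
  simp only [blockSum, of_apply, Fintype.sum_prod_type]
  exact Finset.sum_congr rfl fun _ _ => Finset.sum_comm

lemma sum_entries_kronecker {R l m n p : Type*} [CommSemiring R] [Fintype l] [Fintype m]
    [Fintype n] [Fintype p] (A : Matrix l m R) (B : Matrix n p R) :
    ∑ i, ∑ j, (A ⊗ₖ B) i j = (∑ i, ∑ j, A i j) * ∑ i, ∑ j, B i j := by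
  simp only [kroneckerMap_apply, Fintype.sum_prod_type, Finset.sum_mul_sum]

namespace PosSemidef

section CommRing

variable {R : Type*} [CommRing R] [PartialOrder R] [StarRing R]

lemma sum_entries_nonneg {n : Type*} [Fintype n] {M : Matrix n n R} (hM : M.PosSemidef) :
    0 ≤ ∑ i, ∑ j, M i j := by
  simpa [dotProduct, mulVec, Finset.sum_comm] using hM.dotProduct_mulVec_nonneg 1

lemma blockSum {α β : Type*} [Fintype α] [Fintype β] {M : Matrix (α × β) (α × β) R}
    (hM : M.PosSemidef) : M.blockSum.PosSemidef := by
  classical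
  convert hM.conjTranspose_mul_mul_same (of fun (p : α × β) x => if p.1 = x then 1 else 0)
    using 1
  ext x x'
  simp [Matrix.blockSum, mul_apply, Fintype.sum_prod_type, Finset.sum_comm (γ := α),
    apply_ite star]
  exact Finset.sum_comm

end CommRing

variable {n R : Type*} [Fintype n] [CommRing R] [LinearOrder R] [IsStrictOrderedRing R]
  [StarRing R] {M : Matrix n n R}

lemma apply_add_apply_le (hM : M.PosSemidef) (i j : n) : M i j + M j i ≤ M i i + M j j := by
  classical
  have := hM.dotProduct_mulVec_nonneg (Pi.single i 1 - Pi.single j 1)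
  simp [mulVec_sub, sub_dotProduct] at this
  linarith

lemma sum_entries_le_card_mul_trace (hM : M.PosSemidef) :
    ∑ i, ∑ j, M i j ≤ Fintype.card n * M.trace := by
  have h := Finset.sum_le_sum fun i (_ : i ∈ Finset.univ) =>
    Finset.sum_le_sum fun j (_ : j ∈ Finset.univ) => hM.apply_add_apply_le i j
  simp only [Finset.sum_add_distrib, Finset.sum_const, Finset.card_univ, nsmul_eq_mul] at h
  rw [Finset.sum_comm (f := fun i j => M j i), ← Finset.mul_sum] at h
  simp only [trace, diag_apply]
  linarith

end PosSemidef

end Matrix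

lemma Real.sSup_mul_sSup_le {s t : Set ℝ} {c : ℝ} (hs : ∀ a ∈ s, 0 ≤ a) (ht : ∀ b ∈ t, 0 ≤ b)
    (hc : 0 ≤ c) (h : ∀ a ∈ s, ∀ b ∈ t, a * b ≤ c) : sSup s * sSup t ≤ c := by
  rw [mul_comm, ← smul_eq_mul, ← Real.sSup_smul_of_nonneg (Real.sSup_nonneg ht)]
  refine Real.sSup_le ?_ hc
  rintro _ ⟨a, ha, rfl⟩
  change sSup t * a ≤ c
  rw [mul_comm, ← smul_eq_mul, ← Real.sSup_smul_of_nonneg (hs a ha)]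
  refine Real.sSup_le ?_ hc
  rintro _ ⟨b, hb, rfl⟩
  exact h a ha b hb

section LovaszTheta

variable {γ : Type*} [Fintype γ] {Z : SimpleGraph γ} {M : Matrix γ γ ℝ}

lemma le_lovTheta (hM : M.PosSemidef) (htr : M.trace = 1)
    (hZ : ∀ z z', Z.Adj z z' → M z z' = 0) : ∑ z, ∑ z', M z z' ≤ lovTheta Z := by
  refine le_csSup ⟨Fintype.card γ, ?_⟩ ⟨M, hM, htr, hZ, rfl⟩
  rintro _ ⟨N, hN, hNtr, -, rfl⟩
  simpa [hNtr] using hN.sum_entries_le_card_mul_trace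

lemma lovTheta_nonneg (Z : SimpleGraph γ) : 0 ≤ lovTheta Z :=
  Real.sSup_nonneg <| by rintro _ ⟨N, hN, -, -, rfl⟩; exact hN.sum_entries_nonneg

lemma lovTheta_le {c : ℝ} (hc : 0 ≤ c)
    (h : ∀ M : Matrix γ γ ℝ, M.PosSemidef → M.trace = 1 → (∀ z z', Z.Adj z z' → M z z' = 0) →
      ∑ z, ∑ z', M z z' ≤ c) :
    lovTheta Z ≤ c :=
  Real.sSup_le (by rintro _ ⟨M, hM, htr, hZ, rfl⟩; exact h M hM htr hZ) hc

lemma lovTheta_anti : Antitone (lovTheta (γ := γ)) := fun _ _ hGH =>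
  lovTheta_le (lovTheta_nonneg _) fun _ hM htr hH =>
    le_lovTheta hM htr fun z z' hadj => hH z z' (hGH hadj)

lemma sum_entries_le_lovTheta_mul_trace (hM : M.PosSemidef)
    (hZ : ∀ z z', Z.Adj z z' → M z z' = 0) :
    ∑ z, ∑ z', M z z' ≤ lovTheta Z * M.trace := by
  rcases hM.trace_nonneg.eq_or_lt with htr | htr
  · simp [hM.trace_eq_zero_iff.mp htr.symm]
  have hscaled := le_lovTheta (Z := Z) (hM.smul (inv_nonneg.mpr htr.le))
    (by rw [trace_smul, smul_eq_mul, inv_mul_cancel₀ htr.ne'])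
    (fun z z' hadj => by simp [hZ z z' hadj])
  simp only [Matrix.smul_apply, smul_eq_mul, ← Finset.mul_sum] at hscaled
  rwa [inv_mul_le_iff₀ htr, mul_comm] at hscaled

end LovaszTheta

lemma lexProd_le_disjProd {α β : Type*} (X : SimpleGraph α) (Y : SimpleGraph β) :
    lexProd X Y ≤ disjProd X Y := by
  rintro p q (h | ⟨-, h⟩)
  exacts [Or.inl h, Or.inr h]

section Products

variable {α β : Type*} [Fintype α] [Fintype β] (X : SimpleGraph α) (Y : SimpleGraph β)

lemma mul_lovTheta_le_lovTheta_disjProd :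
    lovTheta X * lovTheta Y ≤ lovTheta (disjProd X Y) := by
  refine Real.sSup_mul_sSup_le ?_ ?_ (lovTheta_nonneg _) ?_
  · rintro _ ⟨M, hM, -, -, rfl⟩; exact hM.sum_entries_nonneg
  · rintro _ ⟨N, hN, -, -, rfl⟩; exact hN.sum_entries_nonneg
  rintro _ ⟨M, hM, hMtr, hX, rfl⟩ _ ⟨N, hN, hNtr, hY, rfl⟩
  rw [← sum_entries_kronecker]
  refine le_lovTheta (hM.kronecker hN) (by rw [trace_kronecker, hMtr, hNtr, one_mul]) ?_
  rintro ⟨x, y⟩ ⟨x', y'⟩ (h | h)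
  · simp [hX x x' h]
  · simp [hY y y' h]

lemma lovTheta_lexProd_le : lovTheta (lexProd X Y) ≤ lovTheta X * lovTheta Y := by
  refine lovTheta_le (mul_nonneg (lovTheta_nonneg X) (lovTheta_nonneg Y)) fun M hM htr hXY => ?_
  have hblock (x : α) : M.blockSum x x ≤ lovTheta Y * ∑ y, M (x, y) (x, y) :=
    sum_entries_le_lovTheta_mul_trace (hM.submatrix (Prod.mk x))
      fun y y' h => hXY (x, y) (x, y') (Or.inr ⟨rfl, h⟩)
  have htrace : M.blockSum.trace ≤ lovTheta Y :=
    calc M.blockSum.trace ≤ ∑ x, lovTheta Y * ∑ y, M (x, y) (x, y) :=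
          Finset.sum_le_sum fun x _ => hblock x
      _ = lovTheta Y := by
          rw [← Finset.mul_sum, ← Fintype.sum_prod_type (f := fun p => M p p),
            show ∑ p, M p p = 1 from htr, mul_one]
  calc ∑ p, ∑ q, M p q = ∑ x, ∑ x', M.blockSum x x' := (sum_entries_blockSum M).symm
    _ ≤ lovTheta X * M.blockSum.trace :=
        sum_entries_le_lovTheta_mul_trace hM.blockSum fun x x' h =>
          Finset.sum_eq_zero fun y _ => Finset.sum_eq_zero fun y' _ =>
            hXY (x, y) (x', y') (Or.inl h)
    _ ≤ lovTheta X * lovTheta Y := mul_le_mul_of_nonneg_left htrace (lovTheta_nonneg X)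

end Products

theorem stmt_13 {α β : Type*} [Fintype α] [Fintype β]
    (X : SimpleGraph α) (Y : SimpleGraph β) :
    lovTheta (lexProd X Y) = lovTheta X * lovTheta Y ∧
    lovTheta X * lovTheta Y = lovTheta (disjProd X Y) := by
  have hlex := lovTheta_lexProd_le X Y
  have hdisj := mul_lovTheta_le_lovTheta_disjProd X Y
  have hanti := lovTheta_anti (lexProd_le_disjProd X Y)
  constructor <;> linarith
end

section
/- Let X be a finite simple graph, let d ≥ 1, and let P_x (x ∈ V(X)) be real symmetric idempotent d×d matrices (projectors) such that P_x P_{x'} = 0 whenever x is adjacent to x'. Then (∑_{x∈V(X)} rank(P_x))/d ≤ ϑ^{CS+}(X), where ϑ^{CS+}(X) is the supremum of ∑_{x,x'} M_{x,x'} over completely positive semidefinite matrices M indexed by V(X) with tr(M) = 1 and M_{x,x'} = 0 whenever x is adjacent to x'. -/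
open Matrix

/-- A real matrix is completely positive if it equals `Pᵀ * P`
for some entrywise nonnegative real matrix `P`. -/
def IsCP {ι : Type*} (H : Matrix ι ι ℝ) : Prop :=
  ∃ (n : ℕ) (P : Matrix (Fin n) ι ℝ), (∀ i j, 0 ≤ P i j) ∧ H = Pᵀ * P

/-- A real matrix indexed by `ι` is completely positive semidefinite if it is the Gram
matrix of real positive semidefinite `d × d` matrices for some `d ≥ 1`. -/
def IsCPSD {ι : Type*} (H : Matrix ι ι ℝ) : Prop :=
  ∃ d : ℕ, 0 < d ∧ ∃ ρ : ι → Matrix (Fin d) (Fin d) ℝ,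
    (∀ i, (ρ i).PosSemidef) ∧ ∀ i j, H i j = (ρ i * ρ j).trace

/-- A real matrix is doubly nonnegative if it is positive semidefinite
and entrywise nonnegative. -/
def IsDNN {ι : Type*} [Fintype ι] (H : Matrix ι ι ℝ) : Prop :=
  H.PosSemidef ∧ ∀ i j, 0 ≤ H i j

/-- The CPSD variant of the Lovász theta function, `ϑ^{CS₊}(Z)`. -/
noncomputable def thetaCSPD {γ : Type*} [Fintype γ] (Z : SimpleGraph γ) : ℝ :=
  sSup {r : ℝ | ∃ M : Matrix γ γ ℝ, IsCPSD M ∧ M.trace = 1 ∧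
    (∀ z z', Z.Adj z z' → M z z' = 0) ∧ r = ∑ z, ∑ z', M z z'}
/-! The rank of a projector is its trace, so with `T = ∑ₓ tr Pₓ` the claim is `T / d ≤ ϑ`.
If `T > 0`, the Gram matrix `M x y = tr (Pₓ P_y) / T` of the (positive semidefinite) projectors is
feasible: it has trace `1` and vanishes on edges. Its entry sum is `tr (S²) / T` for
`S = ∑ₓ Pₓ`, and Cauchy–Schwarz `(tr S)² ≤ d · tr (S²)` bounds this below by `T / d`. The
supremum is finite because `2 tr (ρσ) ≤ tr ρ² + tr σ²` gives `∑ M ≤ |V| · tr M`, and it is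
nonnegative because `tr (ρσ) ≥ 0` for positive semidefinite `ρ, σ`. -/

namespace Matrix

variable {n : Type*} [Fintype n]

theorem natCast_rank_eq_trace_of_isIdempotentElem {K : Type*} [Field K] [DecidableEq n]
    {A : Matrix n n K} (hA : IsIdempotentElem A) : (A.rank : K) = A.trace := by
  have hproj := (LinearMap.isProj_range_iff_isIdempotentElem _).mpr
    (hA.map (Matrix.toLinAlgEquiv' (R := K) (n := n)))
  rw [← trace_toLin'_eq]
  exact hproj.trace.symm

open scoped ComplexOrder MatrixOrder in
theorem PosSemidef.trace_mul_nonneg {𝕜 : Type*} [RCLike 𝕜] {A B : Matrix n n 𝕜}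
    (hA : A.PosSemidef) (hB : B.PosSemidef) : 0 ≤ (A * B).trace := by
  classical
  obtain ⟨C, rfl⟩ := CStarAlgebra.nonneg_iff_eq_star_mul_self.mp hA.nonneg
  rw [star_eq_conjTranspose, Matrix.mul_assoc, trace_mul_comm]
  exact (hB.mul_mul_conjTranspose_same C).trace_nonneg

theorem IsHermitian.posSemidef_of_isIdempotentElem {R : Type*} [CommRing R] [PartialOrder R]
    [StarRing R] [StarOrderedRing R] {P : Matrix n n R} (hs : P.IsHermitian)
    (hi : IsIdempotentElem P) : P.PosSemidef := by
  simpa only [hs.eq, hi.eq] using posSemidef_conjTranspose_mul_self P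

theorem two_mul_trace_mul_le_of_isSymm {A B : Matrix n n ℝ} (hA : A.IsSymm) (hB : B.IsSymm) :
    2 * (A * B).trace ≤ (A * A).trace + (B * B).trace := by
  have h := (posSemidef_conjTranspose_mul_self (A - B)).trace_nonneg
  rw [conjTranspose_eq_transpose_of_trivial, transpose_sub, hA.eq, hB.eq, sub_mul, mul_sub,
    mul_sub, trace_sub, trace_sub, trace_sub, trace_mul_comm B A] at h
  linarith

theorem sq_trace_le_card_mul_trace_transpose_mul_self (A : Matrix n n ℝ) :
    A.trace ^ 2 ≤ Fintype.card n * (Aᵀ * A).trace :=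
  calc A.trace ^ 2 ≤ Fintype.card n * ∑ i, A i i ^ 2 := sq_sum_le_card_mul_sum_sq
    _ ≤ Fintype.card n * ∑ i, ∑ j, A j i ^ 2 := by
      gcongr with i
      exact Finset.single_le_sum (f := fun j => A j i ^ 2) (fun j _ => sq_nonneg _)
        (Finset.mem_univ i)
    _ = Fintype.card n * (Aᵀ * A).trace := by
      simp only [trace, diag_apply, mul_apply, transpose_apply, sq]

theorem sq_sum_trace_le_card_mul_sum_trace_mul {ι : Type*} [Fintype ι] {P : ι → Matrix n n ℝ}
    (hP : ∀ i, (P i).IsSymm) :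
    (∑ i, (P i).trace) ^ 2 ≤ Fintype.card n * ∑ i, ∑ j, (P i * P j).trace := by
  have hS : (∑ i, P i)ᵀ = ∑ i, P i := by
    rw [transpose_sum]
    exact Finset.sum_congr rfl fun i _ => (hP i).eq
  simpa only [hS, ← trace_sum, Finset.sum_mul_sum] using
    sq_trace_le_card_mul_trace_transpose_mul_self (∑ i, P i)

end Matrix

section CPSD

variable {ι : Type*} {M : Matrix ι ι ℝ}

theorem IsCPSD.smul (hM : IsCPSD M) {c : ℝ} (hc : 0 ≤ c) : IsCPSD (c • M) := by
  obtain ⟨d, hd, ρ, hρ, hMρ⟩ := hM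
  refine ⟨d, hd, fun i => √c • ρ i, fun i => (hρ i).smul (Real.sqrt_nonneg c), fun i j => ?_⟩
  rw [Matrix.smul_apply, hMρ, smul_mul_smul_comm, trace_smul, Real.mul_self_sqrt hc, smul_eq_mul]

theorem IsCPSD.nonneg (hM : IsCPSD M) (i j : ι) : 0 ≤ M i j := by
  obtain ⟨d, -, ρ, hρ, hMρ⟩ := hM
  exact hMρ i j ▸ (hρ i).trace_mul_nonneg (hρ j)

theorem IsCPSD.two_mul_le_add_diag (hM : IsCPSD M) (i j : ι) : 2 * M i j ≤ M i i + M j j := by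
  obtain ⟨d, -, ρ, hρ, hMρ⟩ := hM
  have hsymm k : (ρ k).IsSymm := isHermitian_iff_isSymm.mp (hρ k).isHermitian
  simpa only [hMρ] using two_mul_trace_mul_le_of_isSymm (hsymm i) (hsymm j)

theorem IsCPSD.sum_le_card_mul_trace [Fintype ι] (hM : IsCPSD M) :
    ∑ i, ∑ j, M i j ≤ Fintype.card ι * M.trace := by
  have h := Finset.sum_le_sum fun i (_ : i ∈ Finset.univ) =>
    Finset.sum_le_sum fun j (_ : j ∈ Finset.univ) => hM.two_mul_le_add_diag i j
  simp only [← Finset.mul_sum, Finset.sum_add_distrib, Finset.sum_const, Finset.card_univ,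
    nsmul_eq_mul] at h
  simp only [trace, diag_apply]
  linarith

end CPSD

section thetaCSPD

variable {γ : Type*} [Fintype γ] (Z : SimpleGraph γ)

theorem thetaCSPD_nonneg : 0 ≤ thetaCSPD Z :=
  Real.sSup_nonneg <| by
    rintro r ⟨M, hM, -, -, rfl⟩
    exact Finset.sum_nonneg fun i _ => Finset.sum_nonneg fun j _ => hM.nonneg i j

theorem sum_le_thetaCSPD {M : Matrix γ γ ℝ} (hM : IsCPSD M) (htr : M.trace = 1)
    (hadj : ∀ z z', Z.Adj z z' → M z z' = 0) : ∑ z, ∑ z', M z z' ≤ thetaCSPD Z := by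
  refine le_csSup ⟨Fintype.card γ, ?_⟩ ⟨M, hM, htr, hadj, rfl⟩
  rintro r ⟨M', hM', htr', -, rfl⟩
  simpa only [htr', mul_one] using hM'.sum_le_card_mul_trace

end thetaCSPD

theorem sum_trace_div_le_thetaCSPD {α : Type*} [Fintype α] (X : SimpleGraph α) {d : ℕ}
    (hd : 0 < d) {P : α → Matrix (Fin d) (Fin d) ℝ} (hsymm : ∀ x, (P x).IsSymm)
    (hidem : ∀ x, IsIdempotentElem (P x)) (horth : ∀ x x', X.Adj x x' → P x * P x' = 0)
    (hT : 0 < ∑ x, (P x).trace) :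
    (∑ x, (P x).trace) / d ≤ thetaCSPD X := by
  set T := ∑ x, (P x).trace
  have hpsd x : (P x).PosSemidef :=
    (isHermitian_iff_isSymm.mpr (hsymm x)).posSemidef_of_isIdempotentElem (hidem x)
  set M : Matrix α α ℝ := T⁻¹ • of fun x y => (P x * P y).trace
  have hM : IsCPSD M := IsCPSD.smul ⟨d, hd, P, hpsd, fun _ _ => rfl⟩ (inv_nonneg.mpr hT.le)
  have htr : M.trace = 1 := by
    rw [trace_smul]
    change T⁻¹ • ∑ x, (P x * P x).trace = 1
    simp only [(hidem _).eq, smul_eq_mul]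
    exact inv_mul_cancel₀ hT.ne'
  have hadj x y (hxy : X.Adj x y) : M x y = 0 := by
    simp only [M, Matrix.smul_apply, of_apply, horth x y hxy, trace_zero, smul_zero]
  have hCS : T ^ 2 ≤ d * ∑ x, ∑ y, (P x * P y).trace := by
    simpa only [Fintype.card_fin] using sq_sum_trace_le_card_mul_sum_trace_mul hsymm
  calc T / d ≤ T⁻¹ * ∑ x, ∑ y, (P x * P y).trace := by
        rw [div_le_iff₀ (Nat.cast_pos.mpr hd), inv_mul_eq_div, div_mul_eq_mul_div,
          le_div_iff₀ hT, ← sq, mul_comm]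
        exact hCS
    _ = ∑ x, ∑ y, M x y := by
        simp only [M, Finset.mul_sum, Matrix.smul_apply, of_apply, smul_eq_mul]
    _ ≤ thetaCSPD X := sum_le_thetaCSPD X hM htr hadj

theorem stmt_18 {α : Type*} [Fintype α] (X : SimpleGraph α)
    (d : ℕ) (hd : 0 < d) (P : α → Matrix (Fin d) (Fin d) ℝ)
    (hsymm : ∀ x, (P x).IsSymm) (hidem : ∀ x, P x * P x = P x)
    (horth : ∀ x x', X.Adj x x' → P x * P x' = 0) :
    (∑ x, ((P x).rank : ℝ)) / d ≤ thetaCSPD X := by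
  have hrank : ∑ x, ((P x).rank : ℝ) = ∑ x, (P x).trace :=
    Finset.sum_congr rfl fun x _ => natCast_rank_eq_trace_of_isIdempotentElem (hidem x)
  have hT : 0 ≤ ∑ x, (P x).trace := by
    rw [← hrank]
    positivity
  rw [hrank]
  rcases hT.eq_or_lt with hT | hT
  · rw [← hT, zero_div]
    exact thetaCSPD_nonneg X
  · exact sum_trace_div_le_thetaCSPD X hd hsymm hidem horth hT
end
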